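/- Let n >= 4 and let D_n be the Coxeter group of type D_n, realized as even-signed permutations with Coxeter element c = (-1 -2 ... -(n-1) 1 2 ... (n-1))(-n n). Suppose v is a noncrossing partition in NC(D_n,c) and k in +-[n-1] satisfies v(k) in {-n, n}. Let Y = {succ(k), succ^2(k), ..., succ^{n-1}(k)} be the set of the next n-1 elements after k in the clockwise cyclic order on +-[n-1]. Then no element of Y lies in the same cycle of v as k. -/

import Mathlib

/-!
Common definitions: reflection length (absolute length) with respect to a set `R` of
"reflections" in a group, the absolute order, joins in the noncrossing partition lattice
`NC(W,c) = [1,c]`, the noncrossing projection `piT`, and the pop-tsack torsing operator `popT`.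
-/

namespace PopTsack

variable {G : Type*} [Group G]

open scoped Classical

/-- The reflection length of `w` with respect to the set `R` of reflections:
the least `r` such that `w` is a product of `r` elements of `R`. -/
noncomputable def absLength (R : Set G) (w : G) : ℕ :=
  sInf {r : ℕ | ∃ l : List G, l.length = r ∧ (∀ t ∈ l, t ∈ R) ∧ l.prod = w}

/-- The absolute order: `v ≤_T w` iff `ℓ_T v + ℓ_T (w v⁻¹) = ℓ_T w`. -/
def absLe (R : Set G) (v w : G) : Prop :=
  absLength R v + absLength R (w * v⁻¹) = absLength R w

/-- `p` is the join, in the noncrossing partition lattice `NC(G,c)` (the interval `[1,c]`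
in absolute order), of the set `A ⊆ NC(G,c)`. -/
def IsNCJoin (R : Set G) (c : G) (A : Set G) (p : G) : Prop :=
  absLe R p c ∧ (∀ a ∈ A, absLe R a p) ∧
    ∀ q : G, absLe R q c → (∀ a ∈ A, absLe R a q) → absLe R p q

/-- The noncrossing projection `π_T(w,c)`: the join in `NC(G,c)` of the set of reflections
lying weakly below `w` in absolute order.  (By Brady–Watt, `NC(G,c)` is a lattice when `G` is a
finite Coxeter group and `c` a Coxeter element, so this join exists; the value is defined by
choice and defaults to `1` in the degenerate case where no join exists.) -/
noncomputable def piT (R : Set G) (c w : G) : G :=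
  if h : ∃ p : G, IsNCJoin R c {t | t ∈ R ∧ absLe R t w} p then h.choose else 1

/-- The Coxeter pop-tsack torsing operator `Pop_T(w,c) = w ⬝ π_T(w,c)⁻¹`. -/
noncomputable def popT (R : Set G) (c w : G) : G := w * (piT R c w)⁻¹

end PopTsack


namespace SignedPerm

/-- The carrier type for `±[n] = {-n, …, -1, 1, …, n}`: the pair `(k, b)` represents the
integer `k+1` if `b = true` and `-(k+1)` if `b = false`. -/
abbrev Idx (n : ℕ) := Fin n × Bool

variable {n : ℕ}

/-- The integer value in `±[n]` of an element of the carrier type. -/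
def val (x : Idx n) : ℤ := if x.2 then (x.1 : ℤ) + 1 else -((x.1 : ℤ) + 1)

/-- Negation on `±[n]`. -/
def neg (x : Idx n) : Idx n := (x.1, !x.2)

/-- Membership in the type-`D_n` Coxeter group, viewed inside the permutations of `±[n]`:
the permutations commuting with negation that send an even number of positive values to
negative values. -/
def MemD (w : Equiv.Perm (Idx n)) : Prop :=
  (∀ x : Idx n, w (neg x) = neg (w x)) ∧
  Even ((Finset.univ.filter fun x : Idx n => 0 < val x ∧ val (w x) < 0).card)

/-- The set of reflections of `D_n`: the permutations `(i j)(-i -j)` for `i, j ∈ ±[n]` with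
`i ∉ {j, -j}`. -/
def reflD (n : ℕ) : Set (Equiv.Perm (Idx n)) :=
  {t | ∃ x y : Idx n, x ≠ y ∧ x ≠ neg y ∧
        t = Equiv.swap x y * Equiv.swap (neg x) (neg y)}

/-- `c` is the Coxeter element `(-1 -2 ⋯ -(n-1) 1 2 ⋯ (n-1))(-n n)` of `D_n`. -/
def IsCoxD (c : Equiv.Perm (Idx n)) : Prop :=
  ∀ x : Idx n, val (c x) =
    if val x = (n : ℤ) then -(n : ℤ)
    else if val x = -(n : ℤ) then (n : ℤ)
    else if val x = (n : ℤ) - 1 then -1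
    else if val x = -((n : ℤ) - 1) then 1
    else if 0 < val x then val x + 1
    else val x - 1

/-- The cyclic successor in the clockwise cyclic order `-1, -2, …, -(n-1), 1, 2, …, n-1`
on `±[n-1]` (described on integer values). -/
def succD (n : ℕ) (j : ℤ) : ℤ :=
  if j = -((n : ℤ) - 1) then 1
  else if j = (n : ℤ) - 1 then -1
  else if j < 0 then j - 1
  else j + 1

/-- The cyclic predecessor in the clockwise cyclic order `-1, -2, …, -(n-1), 1, 2, …, n-1`
on `±[n-1]` (described on integer values). -/
def predD (n : ℕ) (j : ℤ) : ℤ :=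
  if j = 1 then -((n : ℤ) - 1)
  else if j = -1 then (n : ℤ) - 1
  else if j < 0 then j + 1
  else j - 1

end SignedPerm

open PopTsack SignedPerm

/-!
Let `D_n` act on `ℝⁿ` by signed permutation matrices, so that every reflection fixes a
hyperplane. If `v ≤_T c` and `u = c v⁻¹`, then `codim Fix u + codim Fix v ≤ ℓ_T u + ℓ_T v =
ℓ_T c ≤ n` (`c` is a product of `n` explicit reflections) and `Fix u ∩ Fix v ⊆ Fix c = 0`, hence
`Fix u + Fix v = ℝⁿ`. Put `b_i = cⁱ k`, so that `b_1, …, b_m` are the clockwise successors of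
`k`, and let `e_a` be the signed coordinate functional of `a ∈ ±[n]`. The functional `λ = ∑_{i<m} (e_{v b_i} - e_{b_{i+1}})` vanishes on
`Fix u` because `u (v b_i) = b_{i+1}`, and, by telescoping, on `Fix v` if `b_m` lies in the
`v`-cycle of `k`. But `λ` does not vanish on the `n`-th basis vector: among its terms only
`e_{v k}` sees the `n`-th coordinate, since `b_1, …, b_m ∈ ±[n-1]` and `b_1, …, b_{m-1} ≠ ±k`.
-/

namespace LinearMap

open Module

variable {K V : Type*} [DivisionRing K] [AddCommGroup V] [Module K V] [FiniteDimensional K V]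

theorem finrank_le_finrank_ker_add_one (ψ : V →ₗ[K] K) :
    finrank K V ≤ finrank K (ker ψ) + 1 := by
  have := finrank_range_add_finrank_ker ψ
  have := Submodule.finrank_le (range ψ)
  rw [finrank_self] at this
  omega

end LinearMap

namespace PopTsack

variable {G : Type*} [Group G] {R : Set G}

theorem absLength_prod_le_length {l : List G} (hl : ∀ t ∈ l, t ∈ R) :
    absLength R l.prod ≤ l.length :=
  Nat.sInf_le ⟨l, rfl, hl, rfl⟩

theorem absLength_eq_zero_of_notMem_closure {w : G} (hw : w ∉ Subgroup.closure R) :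
    absLength R w = 0 := by
  refine Nat.sInf_eq_zero.mpr (Or.inr (Set.eq_empty_of_forall_notMem ?_))
  rintro r ⟨l, -, hl, rfl⟩
  exact hw (list_prod_mem fun t ht => Subgroup.subset_closure (hl t ht))

theorem exists_list_length_eq_absLength (hR : ∀ t ∈ R, t⁻¹ ∈ R) {w : G}
    (hw : w ∈ Subgroup.closure R) :
    ∃ l : List G, l.length = absLength R w ∧ (∀ t ∈ l, t ∈ R) ∧ l.prod = w := by
  rw [← Subgroup.mem_toSubmonoid, Subgroup.closure_toSubmonoid] at hw
  obtain ⟨l, hl, rfl⟩ := Submonoid.exists_list_of_mem_closure hw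
  have hne : {r | ∃ l' : List G, l'.length = r ∧ (∀ t ∈ l', t ∈ R) ∧ l'.prod = l.prod}.Nonempty :=
    ⟨_, l, rfl, fun t ht => (hl t ht).elim id fun h => inv_inv t ▸ hR _ h, rfl⟩
  exact Nat.sInf_mem hne

theorem mem_closure_of_absLe (hR : ∀ t ∈ R, t⁻¹ ∈ R) {c v : G} (hc : c ∈ Subgroup.closure R)
    (hc_ne : c ≠ 1) (hv : absLe R v c) : v ∈ Subgroup.closure R := by
  by_contra hvR
  have huR : c * v⁻¹ ∉ Subgroup.closure R := fun huR =>
    hvR (by simpa using (Subgroup.closure R).mul_mem (inv_mem huR) hc)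
  obtain ⟨l, hl, -, rfl⟩ := exists_list_length_eq_absLength hR hc
  rw [absLe, absLength_eq_zero_of_notMem_closure hvR, absLength_eq_zero_of_notMem_closure huR,
    ← hl, eq_comm, List.length_eq_zero_iff] at hv
  exact hc_ne (by rw [hv, List.prod_nil])

section FixedSpace

open Module

variable {K V : Type*} [DivisionRing K] [AddCommGroup V] [Module K V] [FiniteDimensional K V]

variable {fix : G → Submodule K V}

theorem finrank_le_finrank_fix_prod_add_length (fix_one : fix 1 = ⊤)
    (fix_mul : ∀ a b, fix a ⊓ fix b ≤ fix (a * b))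
    (fix_mem : ∀ t ∈ R, finrank K V ≤ finrank K (fix t) + 1) :
    ∀ {l : List G}, (∀ t ∈ l, t ∈ R) → finrank K V ≤ finrank K (fix l.prod) + l.length
  | [], _ => by rw [List.prod_nil, fix_one, finrank_top, List.length_nil, add_zero]
  | t :: l, hl => by
    have ht := fix_mem t (hl t List.mem_cons_self)
    have hl' := finrank_le_finrank_fix_prod_add_length fix_one fix_mul fix_mem
      fun s hs => hl s (List.mem_cons_of_mem t hs)
    have hinf := Submodule.finrank_sup_add_finrank_inf_eq (fix t) (fix l.prod)
    have hsup := Submodule.finrank_le (fix t ⊔ fix l.prod)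
    have hmul := Submodule.finrank_mono (fix_mul t l.prod)
    rw [List.prod_cons, List.length_cons]
    omega

theorem finrank_le_finrank_fix_add_absLength (hR : ∀ t ∈ R, t⁻¹ ∈ R) (fix_one : fix 1 = ⊤)
    (fix_mul : ∀ a b, fix a ⊓ fix b ≤ fix (a * b))
    (fix_mem : ∀ t ∈ R, finrank K V ≤ finrank K (fix t) + 1) {w : G}
    (hw : w ∈ Subgroup.closure R) : finrank K V ≤ finrank K (fix w) + absLength R w := by
  obtain ⟨l, hlen, hl, rfl⟩ := exists_list_length_eq_absLength hR hw
  exact hlen ▸ finrank_le_finrank_fix_prod_add_length fix_one fix_mul fix_mem hl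

theorem fix_sup_fix_eq_top (hR : ∀ t ∈ R, t⁻¹ ∈ R) (fix_one : fix 1 = ⊤)
    (fix_mul : ∀ a b, fix a ⊓ fix b ≤ fix (a * b))
    (fix_mem : ∀ t ∈ R, finrank K V ≤ finrank K (fix t) + 1) {u v : G}
    (hu : u ∈ Subgroup.closure R) (hv : v ∈ Subgroup.closure R) (huv : fix (u * v) = ⊥)
    (hlen : absLength R u + absLength R v ≤ finrank K V) : fix u ⊔ fix v = ⊤ := by
  have hu' := finrank_le_finrank_fix_add_absLength hR fix_one fix_mul fix_mem hu
  have hv' := finrank_le_finrank_fix_add_absLength hR fix_one fix_mul fix_mem hv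
  have hinf := Submodule.finrank_sup_add_finrank_inf_eq (fix u) (fix v)
  have hbot : fix u ⊓ fix v = ⊥ := eq_bot_iff.mpr (huv ▸ fix_mul u v)
  rw [hbot, finrank_bot] at hinf
  exact Submodule.eq_top_of_finrank_eq (le_antisymm (Submodule.finrank_le _) (by omega))

end FixedSpace

end PopTsack

namespace SignedPerm

open Equiv Module PopTsack

variable {n : ℕ}

theorem neg_involutive : Function.Involutive (neg (n := n)) := fun x => by simp [neg]

theorem val_neg (x : Idx n) : val (neg x) = -val x := by
  obtain ⟨i, _ | _⟩ := x <;> simp [val, neg]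

theorem eq_or_eq_neg_of_fst_eq {a b : Idx n} (h : a.1 = b.1) : a = b ∨ a = neg b := by
  obtain ⟨i, _ | _⟩ := a <;> obtain ⟨j, _ | _⟩ := b <;> simp_all [neg]

theorem val_injective : Function.Injective (val (n := n)) := by
  rintro ⟨⟨i, hi⟩, _ | _⟩ ⟨⟨j, hj⟩, _ | _⟩ h <;> simp [val] at h ⊢ <;> omega

/-- `j ∈ ±[n-1]`. -/
def InRange (n : ℕ) (j : ℤ) : Prop := j ≠ 0 ∧ -((n : ℤ) - 1) ≤ j ∧ j ≤ (n : ℤ) - 1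

theorem inRange_val {x : Idx n} (h₁ : val x ≠ n) (h₂ : val x ≠ -n) : InRange n (val x) := by
  obtain ⟨⟨i, hi⟩, _ | _⟩ := x <;> simp [InRange, val] at * <;> omega

theorem fst_add_two_le_of_inRange {x : Idx n} (h : InRange n (val x)) : x.1.val + 2 ≤ n := by
  obtain ⟨⟨i, hi⟩, _ | _⟩ := x <;> simp [InRange, val] at h ⊢ <;> omega

theorem fst_add_one_eq_of_val_eq {x : Idx n} (h : val x = n ∨ val x = -n) : x.1.val + 1 = n := by
  obtain ⟨⟨i, hi⟩, _ | _⟩ := x <;> simp [val] at h ⊢ <;> omega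

theorem inRange_succD {j : ℤ} (h : InRange n j) : InRange n (succD n j) := by
  obtain ⟨h₀, h₁, h₂⟩ := h
  unfold SignedPerm.succD InRange
  split_ifs <;> omega

theorem inRange_iterate_succD {j : ℤ} (h : InRange n j) (i : ℕ) : InRange n ((succD n)^[i] j) := by
  induction i with
  | zero => exact h
  | succ i ih => rw [Function.iterate_succ_apply']; exact inRange_succD ih

/-- The position of `j` in the clockwise order `-1, …, -(n-1), 1, …, n-1`, counted from `0`. -/
def clockwisePos (n : ℕ) (j : ℤ) : ℤ := if j < 0 then -j - 1 else (n : ℤ) - 2 + j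

theorem clockwisePos_le {j : ℤ} (h : InRange n j) : clockwisePos n j ≤ 2 * n - 3 := by
  obtain ⟨h₀, h₁, h₂⟩ := h
  unfold clockwisePos
  split_ifs <;> omega

theorem clockwisePos_neg {j : ℤ} (h : InRange n j) :
    clockwisePos n (-j) = clockwisePos n j + (n - 1) ∨
      clockwisePos n (-j) = clockwisePos n j - (n - 1) := by
  obtain ⟨h₀, h₁, h₂⟩ := h
  unfold clockwisePos
  split_ifs <;> omega

theorem clockwisePos_succD {j : ℤ} (h : InRange n j) :
    clockwisePos n (succD n j) = clockwisePos n j + 1 ∨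
      clockwisePos n j = 2 * n - 3 ∧ clockwisePos n (succD n j) = 0 := by
  obtain ⟨h₀, h₁, h₂⟩ := h
  unfold clockwisePos SignedPerm.succD
  split_ifs <;> omega

theorem clockwisePos_iterate_succD {j : ℤ} (h : InRange n j) {i : ℕ} (hi : i ≤ 2 * n - 2) :
    clockwisePos n ((succD n)^[i] j) = clockwisePos n j + i ∨
      clockwisePos n ((succD n)^[i] j) = clockwisePos n j + i - (2 * n - 2) := by
  induction i with
  | zero => simp
  | succ i ih =>
    have := clockwisePos_le h
    rw [Function.iterate_succ_apply']
    rcases clockwisePos_succD (inRange_iterate_succD h i) with h' | h' <;> omega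

theorem iterate_succD_ne {j : ℤ} (h : InRange n j) {i : ℕ} (hi₀ : 0 < i) (hi : i + 1 < n) :
    (succD n)^[i] j ≠ j ∧ (succD n)^[i] j ≠ -j := by
  have hpos := clockwisePos_iterate_succD h (i := i) (by omega)
  have := clockwisePos_neg h
  constructor <;> intro he <;> rw [he] at hpos <;> omega

/-- The signed coordinate `z ↦ ±z_{|a|}` of the reflection representation of `D_n` on `ℝⁿ`. -/
noncomputable def coord (a : Idx n) : (Fin n → ℝ) →ₗ[ℝ] ℝ :=
  (if a.2 then (1 : ℝ) else -1) • LinearMap.proj a.1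

theorem coord_apply (a : Idx n) (z : Fin n → ℝ) :
    coord a z = (if a.2 then 1 else -1) * z a.1 := rfl

theorem coord_neg (a : Idx n) : coord (neg a) = -coord a := by
  ext z
  obtain ⟨i, _ | _⟩ := a <;> simp [coord_apply, neg]

theorem coord_apply_single_of_ne {a : Idx n} {i : Fin n} (h : a.1 ≠ i) :
    coord a (Pi.single i 1) = 0 := by
  simp [coord_apply, h]

theorem coord_apply_single_fst_ne_zero (a : Idx n) : coord a (Pi.single a.1 1) ≠ 0 := by
  obtain ⟨i, _ | _⟩ := a <;> simp [coord_apply]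

/-- For `w` commuting with `neg`, the fixed space of `w` in the reflection representation. -/
noncomputable def fixSpace (w : Perm (Idx n)) : Submodule ℝ (Fin n → ℝ) :=
  ⨅ a, LinearMap.ker (coord (w a) - coord a)

theorem mem_fixSpace {w : Perm (Idx n)} {z : Fin n → ℝ} :
    z ∈ fixSpace w ↔ ∀ a, coord (w a) z = coord a z := by
  simp [fixSpace, sub_eq_zero]

theorem fixSpace_one : fixSpace (1 : Perm (Idx n)) = ⊤ :=
  eq_top_iff.mpr fun _ _ => mem_fixSpace.mpr fun _ => rfl

theorem fixSpace_inf_le_mul (w₁ w₂ : Perm (Idx n)) :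
    fixSpace w₁ ⊓ fixSpace w₂ ≤ fixSpace (w₁ * w₂) := by
  rintro z ⟨h₁, h₂⟩
  rw [SetLike.mem_coe, mem_fixSpace] at h₁ h₂
  exact mem_fixSpace.mpr fun a => by rw [Perm.mul_apply, h₁, h₂]

theorem fixSpace_le_pow (w : Perm (Idx n)) : ∀ i : ℕ, fixSpace w ≤ fixSpace (w ^ i)
  | 0 => by rw [pow_zero, fixSpace_one]; exact le_top
  | i + 1 => by
    rw [pow_succ]
    exact (le_inf (fixSpace_le_pow w i) le_rfl).trans (fixSpace_inf_le_mul _ _)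

theorem coord_eq_of_sameCycle {w : Perm (Idx n)} {a b : Idx n} (h : w.SameCycle a b)
    {z : Fin n → ℝ} (hz : z ∈ fixSpace w) : coord a z = coord b z := by
  obtain ⟨i, rfl⟩ := h.exists_nat_pow_eq
  exact (mem_fixSpace.mp (fixSpace_le_pow w i hz) a).symm

theorem ker_sub_le_fixSpace_swap (x y : Idx n) :
    LinearMap.ker (coord x - coord y) ≤ fixSpace (swap x y) := by
  intro z hz
  rw [LinearMap.mem_ker, LinearMap.sub_apply, sub_eq_zero] at hz
  refine mem_fixSpace.mpr fun a => ?_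
  rcases eq_or_ne a x with rfl | hx
  · rw [swap_apply_left, hz]
  rcases eq_or_ne a y with rfl | hy
  · rw [swap_apply_right, hz]
  rw [swap_apply_of_ne_of_ne hx hy]

theorem finrank_le_finrank_fixSpace_add_one {t : Perm (Idx n)} (ht : t ∈ reflD n) :
    finrank ℝ (Fin n → ℝ) ≤ finrank ℝ (fixSpace t) + 1 := by
  obtain ⟨x, y, -, -, rfl⟩ := ht
  have hneg : coord (neg x) - coord (neg y) = -(coord x - coord y) := by
    rw [coord_neg, coord_neg, neg_sub_neg, neg_sub]
  have hker : LinearMap.ker (coord x - coord y) ≤ fixSpace (swap x y * swap (neg x) (neg y)) :=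
    (le_inf (ker_sub_le_fixSpace_swap x y)
      (by rw [← LinearMap.ker_neg, ← hneg]; exact ker_sub_le_fixSpace_swap (neg x) (neg y))).trans
      (fixSpace_inf_le_mul _ _)
  have := Submodule.finrank_mono hker
  have := LinearMap.finrank_le_finrank_ker_add_one (coord x - coord y)
  omega

theorem inv_mem_reflD {t : Perm (Idx n)} (ht : t ∈ reflD n) : t⁻¹ ∈ reflD n := by
  obtain ⟨x, y, hxy, hxny, rfl⟩ := ht
  refine ⟨neg x, neg y, neg_involutive.injective.ne hxy,
    fun h => hxny (neg_involutive.injective h), ?_⟩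
  rw [mul_inv_rev, swap_inv, swap_inv, neg_involutive x, neg_involutive y]

theorem apply_neg_of_mem_reflD {t : Perm (Idx n)} (ht : t ∈ reflD n) (a : Idx n) :
    t (neg a) = neg (t a) := by
  obtain ⟨x, y, hxy, hxny, rfl⟩ := ht
  have hne : ∀ b : Idx n, b ≠ neg b := fun b h => by simpa [neg] using congrArg Prod.snd h
  have hcomm : Commute (swap x y) (swap (neg x) (neg y)) := by
    refine (Perm.disjoint_swap_swap ?_).commute
    have := neg_involutive.injective.ne hxy
    have := hne x
    have := hne y
    have : y ≠ neg x := fun h => hxny (by rw [h, neg_involutive])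
    simp_all
  have hswap : ∀ p q b : Idx n, swap (neg p) (neg q) (neg b) = neg (swap p q b) :=
    neg_involutive.injective.swap_apply
  have hswap' := hswap (neg x) (neg y) (swap x y a)
  rw [neg_involutive x, neg_involutive y] at hswap'
  rw [Perm.mul_apply, Perm.mul_apply, hswap, hswap', ← Perm.mul_apply, ← hcomm.eq,
    Perm.mul_apply]

theorem apply_neg_of_mem_closure {w : Perm (Idx n)} (hw : w ∈ Subgroup.closure (reflD n))
    (a : Idx n) : w (neg a) = neg (w a) := by
  induction hw using Subgroup.closure_induction generalizing a with
  | mem t ht => exact apply_neg_of_mem_reflD ht a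
  | one => rfl
  | mul u w _ _ hu hw => rw [Perm.mul_apply, Perm.mul_apply, hw, hu]
  | inv u _ hu => exact u.injective (by simp [hu])

namespace IsCoxD

variable {c : Perm (Idx n)}

theorem val_apply_of_inRange (hc : IsCoxD c) {x : Idx n} (hx : InRange n (val x)) :
    val (c x) = succD n (val x) := by
  obtain ⟨h₀, h₁, h₂⟩ := hx
  rw [hc x]
  unfold SignedPerm.succD
  split_ifs <;> omega

theorem val_pow_apply (hc : IsCoxD c) {x : Idx n} (hx : InRange n (val x)) (i : ℕ) :
    val ((c ^ i) x) = (succD n)^[i] (val x) := by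
  induction i with
  | zero => rfl
  | succ i ih =>
    rw [pow_succ', Perm.mul_apply, Function.iterate_succ_apply', ← ih,
      hc.val_apply_of_inRange (ih ▸ inRange_iterate_succD hx i)]

theorem apply_of_val_add_two_lt (hc : IsCoxD c) {x : Fin n} (hx : x.val + 2 < n) (s : Bool) :
    c (x, s) = (⟨x + 1, by omega⟩, s) := by
  apply val_injective
  rw [hc]
  cases s <;> simp only [val] <;> simp <;> split_ifs <;> omega

theorem apply_of_val_add_two_eq (hc : IsCoxD c) {x : Fin n} (hx : x.val + 2 = n) (s : Bool) :
    c (x, s) = (⟨0, by omega⟩, !s) := by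
  apply val_injective
  rw [hc]
  cases s <;> simp only [val] <;> simp <;> split_ifs <;> omega

theorem apply_of_val_add_one_eq (hc : IsCoxD c) {x : Fin n} (hx : x.val + 1 = n) (s : Bool) :
    c (x, s) = (x, !s) := by
  apply val_injective
  rw [hc]
  cases s <;> simp only [val] <;> simp <;> split_ifs <;> omega

theorem ne_one (hc : IsCoxD c) (hn : 1 ≤ n) : c ≠ 1 := fun h => by
  simpa [h] using hc.apply_of_val_add_one_eq (x := ⟨n - 1, by omega⟩) (by simp; omega) true

theorem fixSpace_eq_bot (hc : IsCoxD c) (hn : 2 ≤ n) : fixSpace c = ⊥ := by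
  refine eq_bot_iff.mpr fun z hz => ?_
  have hz' : ∀ x : Fin n, coord (c (x, true)) z = z x := fun x => by
    simpa [coord_apply] using mem_fixSpace.mp hz (x, true)
  have hchain : ∀ j (hj : j + 2 ≤ n), z ⟨j, by omega⟩ = z ⟨0, by omega⟩ := by
    intro j hj
    induction j with
    | zero => rfl
    | succ j ih =>
      rw [← ih (by omega), ← hz' ⟨j, by omega⟩, hc.apply_of_val_add_two_lt (by simp; omega)]
      simp [coord_apply]
  have hzero : z ⟨0, by omega⟩ = 0 := by
    have := hz' ⟨n - 2, by omega⟩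
    rw [hc.apply_of_val_add_two_eq (by simp; omega), hchain (n - 2) (by omega)] at this
    simp [coord_apply] at this
    linarith
  have hlast : z ⟨n - 1, by omega⟩ = 0 := by
    have := hz' ⟨n - 1, by omega⟩
    rw [hc.apply_of_val_add_one_eq (by simp; omega)] at this
    simp [coord_apply] at this
    linarith
  rw [Submodule.mem_bot]
  funext ⟨i, hi⟩
  rcases Nat.lt_or_ge (i + 1) n with h | h
  · exact (hchain i (by omega)).trans hzero
  · obtain rfl : i = n - 1 := by omega
    exact hlast

end IsCoxD

def pairSwap (a b : Fin n) : Perm (Idx n) :=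
  swap (a, true) (b, true) * swap (a, false) (b, false)

def pairSwapNeg (a b : Fin n) : Perm (Idx n) :=
  swap (a, true) (b, false) * swap (a, false) (b, true)

theorem pairSwap_mem_reflD {a b : Fin n} (h : a ≠ b) : pairSwap a b ∈ reflD n :=
  ⟨(a, true), (b, true), by simpa using h, by simp [neg], rfl⟩

theorem pairSwapNeg_mem_reflD {a b : Fin n} (h : a ≠ b) : pairSwapNeg a b ∈ reflD n :=
  ⟨(a, true), (b, false), by simp, by simpa [neg] using h, rfl⟩

theorem pairSwap_apply (a b x : Fin n) (s : Bool) : pairSwap a b (x, s) = (swap a b x, s) := by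
  cases s
  · rw [pairSwap, Perm.mul_apply, (Prod.mk_left_injective false).swap_apply,
      swap_apply_of_ne_of_ne (by simp) (by simp)]
  · rw [pairSwap, Perm.mul_apply, swap_apply_of_ne_of_ne (x := (x, true)) (by simp) (by simp),
      (Prod.mk_left_injective true).swap_apply]

theorem pairSwapNeg_apply {a b : Fin n} (h : a ≠ b) (x : Fin n) (s : Bool) :
    pairSwapNeg a b (x, s) = if x = a then (b, !s) else if x = b then (a, !s) else (x, s) := by
  cases s <;> simp only [pairSwapNeg, Perm.mul_apply, swap_apply_def] <;> split_ifs <;> simp_all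

def chainWord : (m : ℕ) → m < n → List (Perm (Idx n))
  | 0, _ => []
  | m + 1, h => chainWord m (by omega) ++ [pairSwap ⟨m, by omega⟩ ⟨m + 1, h⟩]

theorem length_chainWord : ∀ (m : ℕ) (hm : m < n), (chainWord m hm).length = m
  | 0, _ => rfl
  | m + 1, hm => by rw [chainWord, List.length_append, length_chainWord m]; rfl

theorem mem_reflD_of_mem_chainWord :
    ∀ {m : ℕ} {hm : m < n} {t : Perm (Idx n)}, t ∈ chainWord m hm → t ∈ reflD n
  | m + 1, hm, t, ht => by
    rw [chainWord, List.mem_append, List.mem_singleton] at ht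
    rcases ht with ht | rfl
    · exact mem_reflD_of_mem_chainWord ht
    · exact pairSwap_mem_reflD (by simp)

theorem chainWord_prod_apply {m : ℕ} (hm : m < n) (x : Fin n) (s : Bool) :
    (chainWord m hm).prod (x, s) =
      (⟨if x.val < m then x.val + 1 else if x.val = m then 0 else x.val,
        by split_ifs <;> omega⟩, s) := by
  induction m generalizing x with
  | zero =>
    simp only [chainWord, List.prod_nil, Perm.one_apply]
    ext
    · simp only
      split_ifs <;> omega
    · rfl
  | succ m ih =>
    rw [chainWord, List.prod_append, List.prod_singleton, Perm.mul_apply, pairSwap_apply,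
      ih (by omega), swap_apply_def]
    ext
    · simp only [Fin.ext_iff]
      split_ifs <;> simp_all <;> omega
    · rfl

def coxWord (hn : 2 ≤ n) : List (Perm (Idx n)) :=
  chainWord (n - 2) (by omega) ++
    [pairSwapNeg ⟨n - 2, by omega⟩ ⟨n - 1, by omega⟩, pairSwap ⟨n - 2, by omega⟩ ⟨n - 1, by omega⟩]

theorem length_coxWord (hn : 2 ≤ n) : (coxWord hn).length = n := by
  rw [coxWord, List.length_append, length_chainWord]
  simp only [List.length_cons, List.length_nil]
  omega

theorem mem_reflD_of_mem_coxWord (hn : 2 ≤ n) {t : Perm (Idx n)} (ht : t ∈ coxWord hn) :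
    t ∈ reflD n := by
  rw [coxWord, List.mem_append, List.mem_pair] at ht
  rcases ht with ht | rfl | rfl
  · exact mem_reflD_of_mem_chainWord ht
  · exact pairSwapNeg_mem_reflD (by simp; omega)
  · exact pairSwap_mem_reflD (by simp; omega)

theorem IsCoxD.eq_prod_coxWord {c : Perm (Idx n)} (hc : IsCoxD c) (hn : 2 ≤ n) :
    c = (coxWord hn).prod := by
  have hne : (⟨n - 2, by omega⟩ : Fin n) ≠ ⟨n - 1, by omega⟩ := by simp; omega
  ext1 ⟨⟨x, hx⟩, s⟩
  simp only [coxWord, List.prod_append, List.prod_cons, List.prod_nil, mul_one, Perm.mul_apply,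
    pairSwap_apply, pairSwapNeg_apply hne]
  rcases Nat.lt_or_ge (x + 2) n with h | h
  · rw [hc.apply_of_val_add_two_lt h, swap_apply_of_ne_of_ne (by simp; omega) (by simp; omega),
      if_neg (by simp; omega), if_neg (by simp; omega), chainWord_prod_apply]
    simp only [Prod.mk.injEq, Fin.mk.injEq, and_true]
    split_ifs <;> omega
  obtain rfl | rfl : x = n - 2 ∨ x = n - 1 := by omega
  · rw [hc.apply_of_val_add_two_eq (by simp; omega), swap_apply_left, if_neg hne.symm, if_pos rfl,
      chainWord_prod_apply]
    simp only [Prod.mk.injEq, Fin.mk.injEq, and_true]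
    split_ifs <;> omega
  · rw [hc.apply_of_val_add_one_eq (by simp; omega), swap_apply_right, if_pos rfl,
      chainWord_prod_apply]
    simp only [Prod.mk.injEq, Fin.mk.injEq, and_true]
    split_ifs <;> omega

theorem IsCoxD.mem_closure {c : Perm (Idx n)} (hc : IsCoxD c) (hn : 2 ≤ n) :
    c ∈ Subgroup.closure (reflD n) :=
  hc.eq_prod_coxWord hn ▸
    list_prod_mem fun _ ht => Subgroup.subset_closure (mem_reflD_of_mem_coxWord hn ht)

theorem IsCoxD.absLength_le {c : Perm (Idx n)} (hc : IsCoxD c) (hn : 2 ≤ n) :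
    absLength (reflD n) c ≤ n :=
  (hc.eq_prod_coxWord hn ▸ absLength_prod_le_length fun _ => mem_reflD_of_mem_coxWord hn).trans_eq
    (length_coxWord hn)

noncomputable def orbitSum (c v : Perm (Idx n)) (x : Idx n) (m : ℕ) : (Fin n → ℝ) →ₗ[ℝ] ℝ :=
  ∑ i ∈ Finset.range m, (coord (v ((c ^ i) x)) - coord ((c ^ (i + 1)) x))

theorem sup_fixSpace_le_ker_orbitSum {c v : Perm (Idx n)} {x : Idx n} {m : ℕ}
    (h : v.SameCycle x ((c ^ m) x)) :
    fixSpace (c * v⁻¹) ⊔ fixSpace v ≤ LinearMap.ker (orbitSum c v x m) := by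
  refine sup_le (fun z hz => ?_) (fun z hz => ?_) <;>
    rw [LinearMap.mem_ker, orbitSum, LinearMap.sum_apply]
  · refine Finset.sum_eq_zero fun i _ => ?_
    have := mem_fixSpace.mp hz (v ((c ^ i) x))
    rw [Perm.mul_apply, Perm.inv_def, symm_apply_apply, ← Perm.mul_apply, ← pow_succ'] at this
    rw [LinearMap.sub_apply, this, sub_self]
  · simp_rw [LinearMap.sub_apply, mem_fixSpace.mp hz]
    rw [Finset.sum_range_sub' (fun i => coord ((c ^ i) x) z), pow_zero, Perm.one_apply,
      coord_eq_of_sameCycle h hz, sub_self]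

theorem orbitSum_apply_single_ne_zero {c v : Perm (Idx n)} (hc : IsCoxD c)
    (hv : ∀ a, v (neg a) = neg (v a)) {k : Idx n} (hk : InRange n (val k))
    (hvk : val (v k) = n ∨ val (v k) = -n) {m : ℕ} (hm₁ : 1 ≤ m) (hm₂ : m ≤ n - 1) :
    orbitSum c v k m (Pi.single (v k).1 1) ≠ 0 := by
  have hb : ∀ i, ((c ^ i) k).1 ≠ (v k).1 := fun i h => by
    have := fst_add_two_le_of_inRange (hc.val_pow_apply hk i ▸ inRange_iterate_succD hk i)
    have := fst_add_one_eq_of_val_eq hvk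
    rw [h] at *
    omega
  rw [orbitSum, LinearMap.sum_apply,
    Finset.sum_eq_single_of_mem 0 (by simp; omega)]
  · rw [LinearMap.sub_apply, pow_zero, Perm.one_apply, coord_apply_single_of_ne (hb _), sub_zero]
    exact coord_apply_single_fst_ne_zero _
  · intro i hi hi₀
    have hne := iterate_succD_ne hk (i := i) (by omega) (by simp at hi; omega)
    rw [LinearMap.sub_apply, coord_apply_single_of_ne (hb _), sub_zero]
    refine coord_apply_single_of_ne fun h => ?_
    rcases eq_or_eq_neg_of_fst_eq h with h | h
    · exact hne.1 (by rw [← hc.val_pow_apply hk, v.injective h])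
    · rw [← hv] at h
      exact hne.2 (by rw [← hc.val_pow_apply hk, v.injective h, val_neg])

end SignedPerm

/-- Let `n ≥ 4` and let `D_n` be realized as even-signed permutations with
Coxeter element `c = (-1 -2 ⋯ -(n-1) 1 2 ⋯ (n-1))(-n n)`.  Suppose `v ∈ NC(D_n, c)` and
`k ∈ ±[n-1]` satisfies `v(k) ∈ {-n, n}`.  Let `Y` consist of the next `n-1` elements after `k`
in the clockwise cyclic order on `±[n-1]`.  Then no element of `Y` lies in the same cycle of
`v` as `k`. -/
theorem noncrossing_typeD_cycle_avoids_clockwise_successors {n : ℕ} (hn : 4 ≤ n)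
    (c : Equiv.Perm (Idx n)) (hc : IsCoxD c)
    (v : Equiv.Perm (Idx n)) (hv : absLe (reflD n) v c)
    (k : Idx n) (hk : val k ≠ (n : ℤ) ∧ val k ≠ -(n : ℤ))
    (hvk : val (v k) = (n : ℤ) ∨ val (v k) = -(n : ℤ)) :
    ∀ (y : Idx n) (m : ℕ), 1 ≤ m → m ≤ n - 1 →
      val y = (succD n)^[m] (val k) → ¬ v.SameCycle k y := by
  intro y m hm₁ hm₂ hy hcyc
  have hkR : InRange n (val k) := inRange_val hk.1 hk.2
  have hcR := hc.mem_closure (by omega)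
  have hvR : v ∈ Subgroup.closure (reflD n) :=
    mem_closure_of_absLe (fun _ => inv_mem_reflD) hcR (hc.ne_one (by omega)) hv
  have hfix : fixSpace (c * v⁻¹) ⊔ fixSpace v = ⊤ :=
    fix_sup_fix_eq_top (fun _ => inv_mem_reflD) fixSpace_one fixSpace_inf_le_mul
      (fun _ => finrank_le_finrank_fixSpace_add_one) (mul_mem hcR (inv_mem hvR)) hvR
      (by rw [inv_mul_cancel_right]; exact hc.fixSpace_eq_bot (by omega))
      (by rw [Module.finrank_fin_fun, add_comm, hv]; exact hc.absLength_le (by omega))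
  have hy' : (c ^ m) k = y := val_injective (by rw [hc.val_pow_apply hkR, hy])
  have hker := sup_fixSpace_le_ker_orbitSum (hy' ▸ hcyc)
  rw [hfix, top_le_iff, LinearMap.ker_eq_top] at hker
  exact orbitSum_apply_single_ne_zero hc (apply_neg_of_mem_closure hvR) hkR hvk hm₁ hm₂
    (by rw [hker, LinearMap.zero_apply])
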